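/- For any compact set K ⊂ ℝ^d and δ > 0, let K^{2δ} := { x ∈ ℝ^d : ‖x−y‖₂ ≤ 2δ for some y ∈ K }. There exists a continuously differentiable function v : ℝ^d → [0,1] such that v(x) = 1 for all x ∈ K, v(x) = 0 for all x ∉ K^{2δ}, and ‖∇v(x)‖₂ ≤ (δ^{−1} d θ_{d−1} / θ_d) · 1{x ∈ K^{2δ} \ K} for all x, where θ_d := d ∫_0^1 exp(−1/(1−r²)) r^{d−1} dr for d > 0 and θ_0 := e^{−1}. -/

import Mathlib

open MeasureTheory Filter Real
open scoped BigOperators RealInnerProductSpace FourierTransform ENNReal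

noncomputable section

/-- `E d` is the Euclidean space `ℝ^d`. -/
abbrev E (d : ℕ) : Type := EuclideanSpace ℝ (Fin d)

/-- The `j`-th standard basis vector of `ℝ^d`. -/
def esingle (d : ℕ) (j : Fin d) : E d := EuclideanSpace.single j (1 : ℝ)

/-- Partial derivative in the `j`-th coordinate of the first argument of a bivariate kernel. -/
def Dx {d : ℕ} (j : Fin d) (k : E d → E d → ℝ) : E d → E d → ℝ :=
  fun x y => fderiv ℝ (fun z => k z y) x (esingle d j)

/-- Partial derivative in the `j`-th coordinate of the second argument of a bivariate kernel. -/
def Dy {d : ℕ} (j : Fin d) (k : E d → E d → ℝ) : E d → E d → ℝ :=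
  fun x y => fderiv ℝ (fun z => k x z) y (esingle d j)

/-- A reproducing kernel Hilbert space of real-valued functions on `ℝ^d`, presented via its
membership predicate, inner product and reproducing kernel. -/
structure RKHSd (d : ℕ) where
  mem : (E d → ℝ) → Prop
  inner : (E d → ℝ) → (E d → ℝ) → ℝ
  kernel : E d → E d → ℝ
  mem_zero : mem 0
  mem_add : ∀ f g, mem f → mem g → mem (f + g)
  mem_smul : ∀ (c : ℝ) f, mem f → mem (c • f)
  inner_symm : ∀ f g, inner f g = inner g f
  inner_add_left : ∀ f g h, inner (f + g) h = inner f h + inner g h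
  inner_smul_left : ∀ (c : ℝ) f g, inner (c • f) g = c * inner f g
  inner_self_nonneg : ∀ f, 0 ≤ inner f f
  inner_self_eq_zero : ∀ f, mem f → inner f f = 0 → f = 0
  kernel_mem : ∀ x, mem (kernel x)
  reproducing : ∀ f, mem f → ∀ x, f x = inner f (kernel x)

/-- The RKHS norm. -/
def RKHSd.norm {d : ℕ} (H : RKHSd d) (f : E d → ℝ) : ℝ := Real.sqrt (H.inner f f)

/-- The Langevin Stein operator `(T_P g)(x) = ⟨g(x), b(x)⟩ + ∑_j ∂_{x_j} g_j(x)`, applied to a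
function given by its components `g : Fin d → E d → ℝ`. -/
def TP {d : ℕ} (b : E d → E d) (g : Fin d → E d → ℝ) (x : E d) : ℝ :=
  (∑ j, g j x * b x j) + ∑ j, fderiv ℝ (g j) x (esingle d j)

/-- The Langevin Stein operator applied to a vector field `g : ℝ^d → ℝ^d`. -/
def TPv {d : ℕ} (b : E d → E d) (g : E d → E d) (x : E d) : ℝ :=
  ⟪g x, b x⟫ + ∑ j, fderiv ℝ (fun z => g z j) x (esingle d j)

/-- The kernel Stein set `G_k` for the Euclidean (`ℓ²`) norm. -/
def SteinSet {d : ℕ} (H : RKHSd d) : Set (Fin d → E d → ℝ) :=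
  {g | (∀ j, H.mem (g j)) ∧ (∑ j, (H.norm (g j)) ^ 2) ≤ 1}

/-- The kernel Stein discrepancy `S(μ) = sup_{g ∈ G_k} |E_μ[(T_P g)(X)]|`. -/
def KSD {d : ℕ} (H : RKHSd d) (b : E d → E d) (μ : Measure (E d)) : ℝ :=
  ⨆ g : SteinSet H, |∫ x, TP b g.1 x ∂μ|

/-- The dual norm `‖v‖* = sup_{N(a) = 1} ⟨a, v⟩` of a norm `N` on `ℝ^d`. -/
def dualNorm {d : ℕ} (N : E d → ℝ) (v : E d) : ℝ :=
  sSup {s | ∃ a : E d, N a = 1 ∧ s = ⟪v, a⟫}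

/-- `N` is a norm on `ℝ^d`. -/
def IsNorm {d : ℕ} (N : E d → ℝ) : Prop :=
  (∀ x, 0 ≤ N x) ∧ (∀ x, N x = 0 ↔ x = 0) ∧
    (∀ x y, N (x + y) ≤ N x + N y) ∧ ∀ (c : ℝ) x, N (c • x) = |c| * N x

/-- The kernel Stein set `G_{k, ‖·‖}` for a general norm `N` on `ℝ^d`. -/
def SteinSetN {d : ℕ} (H : RKHSd d) (N : E d → ℝ) : Set (Fin d → E d → ℝ) :=
  {g | (∀ j, H.mem (g j)) ∧ dualNorm N (WithLp.toLp 2 (fun j => H.norm (g j))) ≤ 1}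

/-- The kernel Stein discrepancy based on the Stein set `G_{k, ‖·‖}`. -/
def KSDN {d : ℕ} (H : RKHSd d) (N : E d → ℝ) (b : E d → E d) (μ : Measure (E d)) : ℝ :=
  ⨆ g : SteinSetN H N, |∫ x, TP b g.1 x ∂μ|

/-- The Stein kernel
`k_0^j(x,y) = b_j(x)b_j(y)k(x,y) + b_j(x)∂_{y_j}k(x,y) + b_j(y)∂_{x_j}k(x,y) + ∂_{x_j}∂_{y_j}k(x,y)`. -/
def steinKernel {d : ℕ} (b : E d → E d) (k : E d → E d → ℝ) (j : Fin d) (x y : E d) : ℝ :=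
  b x j * b y j * k x y + b x j * Dy j k x y + b y j * Dx j k x y + Dx j (Dy j k) x y

/-- `k ∈ C^{(1,1)}`: `k` and all mixed partials `∂_{x_i}∂_{y_j} k` are continuous. -/
def C11 {d : ℕ} (k : E d → E d → ℝ) : Prop :=
  Continuous (fun q : E d × E d => k q.1 q.2) ∧
    ∀ i j : Fin d, Continuous fun q : E d × E d => Dx i (Dy j k) q.1 q.2

/-- `k ∈ C_b^{(1,1)}`: `k` and all mixed partials `∂_{x_i}∂_{y_j} k` are continuous and bounded. -/
def Cb11 {d : ℕ} (k : E d → E d → ℝ) : Prop :=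
  C11 k ∧ (∃ C, ∀ x y, |k x y| ≤ C) ∧
    ∀ i j : Fin d, ∃ C, ∀ x y, |Dx i (Dy j k) x y| ≤ C

/-- `k ∈ C_b^{(2,2)}`. -/
def Cb22 {d : ℕ} (k : E d → E d → ℝ) : Prop :=
  Cb11 k ∧ ∀ i₁ i₂ j₁ j₂ : Fin d,
    Continuous (fun q : E d × E d => Dx i₁ (Dx i₂ (Dy j₁ (Dy j₂ k))) q.1 q.2) ∧
      ∃ C, ∀ x y, |Dx i₁ (Dx i₂ (Dy j₁ (Dy j₂ k))) x y| ≤ C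

/-- `k ∈ C_0^{(1,1)}`: `k` and all mixed partials are continuous and vanishing at infinity. -/
def C011 {d : ℕ} (k : E d → E d → ℝ) : Prop :=
  C11 k ∧ Tendsto (fun q : E d × E d => k q.1 q.2) (cocompact _) (nhds 0) ∧
    ∀ i j : Fin d, Tendsto (fun q : E d × E d => Dx i (Dy j k) q.1 q.2) (cocompact _) (nhds 0)

/-- The score function `b = ∇ log p`. -/
def score {d : ℕ} (p : E d → ℝ) : E d → E d := fun x => gradient (fun z => Real.log (p z)) x

/-- `κ(r) = inf { -2⟨b(x)-b(y), x-y⟩/‖x-y‖² : ‖x-y‖ = r }`. -/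
def kappaFn {d : ℕ} (b : E d → E d) (r : ℝ) : ℝ :=
  sInf {s | ∃ x y : E d, ‖x - y‖ = r ∧ s = -2 * ⟪b x - b y, x - y⟫ / ‖x - y‖ ^ 2}

/-- Distant dissipativity: `κ_0 = liminf_{r → ∞} κ(r) > 0`. -/
def DistantlyDissipative {d : ℕ} (b : E d → E d) : Prop :=
  0 < liminf (fun r => kappaFn b r) atTop

/-- `f` is Lipschitz. -/
def LipschitzFn {d : ℕ} {α : Type*} [NormedAddCommGroup α] (f : E d → α) : Prop :=
  ∃ L : ℝ, 0 ≤ L ∧ ∀ x y, ‖f x - f y‖ ≤ L * ‖x - y‖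

/-- Membership of a target (given by its score `b`) in the class `𝒫` of distantly dissipative
distributions with Lipschitz score. -/
def InP {d : ℕ} (b : E d → E d) : Prop := DistantlyDissipative b ∧ LipschitzFn b

/-- Weak convergence of a sequence of measures to `P`. -/
def WeakConvTo {d : ℕ} (μ : ℕ → Measure (E d)) (P : Measure (E d)) : Prop :=
  ∀ f : BoundedContinuousFunction (E d) ℝ,
    Tendsto (fun m => ∫ x, f x ∂μ m) atTop (nhds (∫ x, f x ∂P))

/-- Uniform tightness of a sequence of measures. -/
def UnifTight {d : ℕ} (μ : ℕ → Measure (E d)) : Prop :=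
  ∀ ε : ℝ, 0 < ε → ∃ R : ℝ, limsup (fun m => μ m {x | R < ‖x‖}) atTop ≤ ENNReal.ofReal ε

/-- `M_0(f) = sup_x ‖f(x)‖`. -/
def M0 {d : ℕ} {α : Type*} [NormedAddCommGroup α] (f : E d → α) : ℝ :=
  sSup {s | ∃ x, s = ‖f x‖}

/-- `M_1(f) = sup_{x ≠ y} ‖f(x) - f(y)‖/‖x - y‖`. -/
def M1 {d : ℕ} {α : Type*} [NormedAddCommGroup α] (f : E d → α) : ℝ :=
  sSup {s | ∃ x y, x ≠ y ∧ s = ‖f x - f y‖ / ‖x - y‖}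

/-- `M_2(g) = sup_{x ≠ y} ‖∇g(x) - ∇g(y)‖_op/‖x - y‖`. -/
def M2 {d : ℕ} (g : E d → E d) : ℝ :=
  sSup {s | ∃ x y, x ≠ y ∧ s = ‖fderiv ℝ g x - fderiv ℝ g y‖ / ‖x - y‖}

/-- The L¹-Wasserstein distance, via couplings. -/
def Wass {d : ℕ} (μ ν : Measure (E d)) : ℝ :=
  sInf {s | ∃ Pi : Measure (E d × E d),
    Pi.map Prod.fst = μ ∧ Pi.map Prod.snd = ν ∧ s = ∫ q, ‖q.1 - q.2‖ ∂Pi}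

/-- The bounded Lipschitz (Dudley) metric. -/
def dBL {d : ℕ} (μ ν : Measure (E d)) : ℝ :=
  sSup {s | ∃ h : E d → ℝ, M0 h + M1 h ≤ 1 ∧ s = |(∫ x, h x ∂μ) - ∫ x, h x ∂ν|}

/-- The tightness rate `R(μ, ε) = inf { r ≥ 0 : μ(‖X‖ > r) ≤ ε }`. -/
def tightRate {d : ℕ} (μ : Measure (E d)) (ε : ℝ) : ℝ :=
  sInf {r | 0 ≤ r ∧ μ {x | r < ‖x‖} ≤ ENNReal.ofReal ε}

/-- `θ_d = d ∫_0^1 exp(-1/(1-r²)) r^{d-1} dr` for `d > 0`, and `θ_0 = e⁻¹`. -/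
def theta (d : ℕ) : ℝ :=
  if d = 0 then Real.exp (-1)
  else d * ∫ r in (0:ℝ)..1, Real.exp (-1 / (1 - r ^ 2)) * r ^ (d - 1)

/-- The volume of the unit Euclidean ball in `ℝ^d`. -/
def Vball (d : ℕ) : ℝ := (volume (Metric.ball (0 : E d) 1)).toReal

/-- `Φhat` is a generalized Fourier transform of `Φ` of order `m`: for every Schwartz test
function `γ` whose derivatives of order `< 2m` vanish at the origin,
`∫ Φ(x) γ̂(x) dx = ∫ Φhat(ω) γ(ω) dω`. -/
def IsGenFT {d : ℕ} (m : ℕ) (Φ Φhat : E d → ℝ) : Prop :=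
  ∀ γ : SchwartzMap (E d) ℂ, (∀ n : ℕ, n < 2 * m → iteratedFDeriv ℝ n (⇑γ) 0 = 0) →
    ∫ x, (Φ x : ℂ) * 𝓕 (⇑γ) x = ∫ ω, (Φhat ω : ℂ) * γ ω

/-- `F(t) = sup_{‖ω‖_∞ ≤ t} Φhat(ω)⁻¹`. -/
def Fsup {d : ℕ} (Φhat : E d → ℝ) (t : ℝ) : ℝ :=
  sSup {s | ∃ ω : E d, (∀ j, |ω j| ≤ t) ∧ s = (Φhat ω)⁻¹}

/-- The standard Gaussian density on `ℝ^d`. -/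
def gaussDensity (d : ℕ) : E d → ℝ := fun x => (2 * π) ^ (-(d : ℝ) / 2) * Real.exp (-‖x‖ ^ 2 / 2)

/-- The standard Gaussian measure `N(0, I_d)` on `ℝ^d`. -/
def stdGaussian (d : ℕ) : Measure (E d) :=
  volume.withDensity fun x => ENNReal.ofReal (gaussDensity d x)

/-- `‖∇_x k(x,y)‖₂`. -/
def gradX {d : ℕ} (k : E d → E d → ℝ) (x y : E d) : ℝ := Real.sqrt (∑ i, (Dx i k x y) ^ 2)

/-- `⟨∇_x, ∇_y k(x,y)⟩ = ∑_i ∂_{x_i}∂_{y_i} k(x,y)`. -/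
def mixedTrace {d : ℕ} (k : E d → E d → ℝ) (x y : E d) : ℝ := ∑ i, Dx i (Dy i k) x y

/-- Kernel decay rate
`γ(r) = sup { max(|k(x,y)|, ‖∇_x k(x,y)‖₂, |⟨∇_x, ∇_y k(x,y)⟩|) : ‖x-y‖₂ ≥ r }`. -/
def decayRate {d : ℕ} (k : E d → E d → ℝ) (r : ℝ) : ℝ :=
  sSup {s | ∃ x y : E d, r ≤ ‖x - y‖ ∧ s = max |k x y| (max (gradX k x y) |mixedTrace k x y|)}

/-- The Stein discrepancy over an arbitrary family `G` of vector fields. -/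
def SDisc {d : ℕ} (b : E d → E d) (G : Set (E d → E d)) (μ : Measure (E d)) : ℝ :=
  ⨆ g : G, |∫ x, TPv b g.1 x ∂μ|

/-!
Mollifying the piecewise linear cutoff `x ↦ clamp((3δ/2 - dist(x, K)) / δ)` by a bump of radius
`δ/4` gives a smooth function that is `1` within `δ/4` of `K`, `0` beyond distance `7δ/4`, and
keeps the Lipschitz constant `δ⁻¹` of the cutoff. Hence its gradient vanishes near `K` and off
`K^{2δ}` and has norm at most `δ⁻¹` elsewhere. It remains to see `θ_d ≤ d θ_{d-1}`, which follows
from the monotonicity in `n` of `∫_0^1 exp(-1/(1-r²)) r^n dr` and, for `d = 1`, from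
`exp(-1/(1-r²)) ≤ e⁻¹`.
-/

open scoped Convolution ContDiff NNReal
open Metric Set

def bumpRadialMoment (n : ℕ) : ℝ := ∫ r in (0:ℝ)..1, rexp (-1 / (1 - r ^ 2)) * r ^ n

theorem theta_of_ne_zero {d : ℕ} (hd : d ≠ 0) : theta d = d * bumpRadialMoment (d - 1) :=
  if_neg hd

theorem intervalIntegrable_bump_mul_pow (n : ℕ) :
    IntervalIntegrable (fun r : ℝ => rexp (-1 / (1 - r ^ 2)) * r ^ n) volume 0 1 := by
  refine (intervalIntegrable_const (c := (1 : ℝ))).mono_fun'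
    (by fun_prop : Measurable _).aestronglyMeasurable ?_
  rw [uIoc_of_le zero_le_one]
  filter_upwards [ae_restrict_mem measurableSet_Ioc] with r ⟨hr0, hr1⟩
  rw [Real.norm_of_nonneg (by positivity)]
  have hexp : rexp (-1 / (1 - r ^ 2)) ≤ 1 :=
    exp_le_one_iff.2 (div_nonpos_of_nonpos_of_nonneg (by norm_num) (by nlinarith))
  exact mul_le_one₀ hexp (by positivity) (pow_le_one₀ hr0.le hr1)

theorem bumpRadialMoment_pos (n : ℕ) : 0 < bumpRadialMoment n :=
  intervalIntegral.intervalIntegral_pos_of_pos_on (intervalIntegrable_bump_mul_pow n)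
    (fun _ hr => mul_pos (exp_pos _) (pow_pos hr.1 n)) zero_lt_one

theorem bumpRadialMoment_succ_le (n : ℕ) : bumpRadialMoment (n + 1) ≤ bumpRadialMoment n :=
  intervalIntegral.integral_mono_on zero_le_one (intervalIntegrable_bump_mul_pow _)
    (intervalIntegrable_bump_mul_pow _) fun _ hr =>
      mul_le_mul_of_nonneg_left (pow_le_pow_of_le_one hr.1 hr.2 n.le_succ) (exp_pos _).le

theorem bumpRadialMoment_zero_le : bumpRadialMoment 0 ≤ rexp (-1) := by
  have hle : ∀ r ∈ Ioo (0:ℝ) 1, rexp (-1 / (1 - r ^ 2)) * r ^ 0 ≤ rexp (-1) := by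
    rintro r ⟨hr0, hr1⟩
    have hpos : 0 < 1 - r ^ 2 := by nlinarith
    rw [pow_zero, mul_one, exp_le_exp, div_le_iff₀ hpos]
    nlinarith
  simpa [bumpRadialMoment] using intervalIntegral.integral_mono_on_of_le_Ioo zero_le_one
    (intervalIntegrable_bump_mul_pow 0) intervalIntegrable_const hle

theorem theta_zero : theta 0 = rexp (-1) := if_pos rfl

theorem theta_pos (d : ℕ) : 0 < theta d := by
  rcases eq_or_ne d 0 with rfl | hd
  · exact theta_zero ▸ exp_pos _
  · rw [theta_of_ne_zero hd]
    exact mul_pos (by positivity) (bumpRadialMoment_pos _)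

theorem theta_le_mul_theta_pred : ∀ {d : ℕ}, d ≠ 0 → theta d ≤ d * theta (d - 1)
  | 1, _ => by simpa [theta_of_ne_zero, theta_zero] using bumpRadialMoment_zero_le
  | m + 2, _ => by
    rw [theta_of_ne_zero (by omega), theta_of_ne_zero (by omega)]
    show ((m + 2 : ℕ) : ℝ) * bumpRadialMoment (m + 1)
      ≤ ((m + 2 : ℕ) : ℝ) * ((m + 1 : ℕ) * bumpRadialMoment m)
    gcongr
    exact (bumpRadialMoment_succ_le m).trans
      (le_mul_of_one_le_left (bumpRadialMoment_pos m).le (by simp))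

theorem one_le_mul_theta_pred_div_theta {d : ℕ} (hd : d ≠ 0) : 1 ≤ d * theta (d - 1) / theta d :=
  (one_le_div (theta_pos d)).2 (theta_le_mul_theta_pred hd)

namespace ContDiffBump

variable {F : Type*} [NormedAddCommGroup F] [NormedSpace ℝ F] [FiniteDimensional ℝ F]
  [MeasurableSpace F] {μ : Measure F} (φ : ContDiffBump (0 : F)) {g : F → ℝ}

theorem normed_convolution_apply (x : F) :
    (φ.normed μ ⋆[ContinuousLinearMap.lsmul ℝ ℝ, μ] g) x = ∫ u, φ.normed μ u * g (x - u) ∂μ :=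
  rfl

variable [BorelSpace F] [μ.IsAddHaarMeasure]

theorem integrable_normed_mul_comp_sub (hg : Continuous g) (x : F) :
    Integrable (fun u => φ.normed μ u * g (x - u)) μ :=
  (φ.continuous_normed.mul (hg.comp (continuous_const.sub continuous_id)))
    |>.integrable_of_hasCompactSupport φ.hasCompactSupport_normed.mul_right

theorem normed_convolution_mem_Icc (hg : Continuous g) (hg01 : ∀ x, g x ∈ Icc 0 1) (x : F) :
    (φ.normed μ ⋆[ContinuousLinearMap.lsmul ℝ ℝ, μ] g) x ∈ Icc 0 1 := by
  rw [normed_convolution_apply]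
  refine ⟨integral_nonneg fun u => mul_nonneg (φ.nonneg_normed u) (hg01 _).1, ?_⟩
  calc ∫ u, φ.normed μ u * g (x - u) ∂μ ≤ ∫ u, φ.normed μ u ∂μ :=
        integral_mono (φ.integrable_normed_mul_comp_sub hg x) φ.integrable_normed fun u =>
          mul_le_of_le_one_right (φ.nonneg_normed u) (hg01 _).2
    _ = 1 := φ.integral_normed

theorem lipschitzWith_normed_convolution {K : ℝ≥0} (hg : LipschitzWith K g) :
    LipschitzWith K (φ.normed μ ⋆[ContinuousLinearMap.lsmul ℝ ℝ, μ] g) := by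
  refine LipschitzWith.of_dist_le_mul fun x y => ?_
  rw [Real.dist_eq, normed_convolution_apply, normed_convolution_apply,
    ← integral_sub (φ.integrable_normed_mul_comp_sub hg.continuous x)
      (φ.integrable_normed_mul_comp_sub hg.continuous y), ← Real.norm_eq_abs]
  calc ‖∫ u, (φ.normed μ u * g (x - u) - φ.normed μ u * g (y - u)) ∂μ‖
      ≤ ∫ u, φ.normed μ u * (K * dist x y) ∂μ := by
        refine norm_integral_le_of_norm_le (φ.integrable_normed.mul_const _)
          (Eventually.of_forall fun u => ?_)
        rw [← mul_sub, norm_mul, Real.norm_of_nonneg (φ.nonneg_normed u), ← dist_sub_right x y u]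
        exact mul_le_mul_of_nonneg_left (hg.dist_le_mul _ _) (φ.nonneg_normed u)
    _ = K * dist x y := by rw [integral_mul_const, φ.integral_normed, one_mul]

end ContDiffBump

theorem lipschitzWith_projIcc_infDist {F : Type*} [PseudoMetricSpace F]
    (s : Set F) {a b : ℝ} (hab : a < b) : LipschitzWith (b - a)⁻¹.toNNReal
      fun x => (projIcc 0 1 zero_le_one ((b - infDist x s) / (b - a)) : ℝ) := by
  have hba : 0 < b - a := sub_pos.2 hab
  refine LipschitzWith.of_dist_le_mul fun x y => ?_
  rw [Real.coe_toNNReal _ (inv_nonneg.2 hba.le)]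
  calc dist (projIcc 0 1 zero_le_one ((b - infDist x s) / (b - a)) : ℝ)
        (projIcc 0 1 zero_le_one ((b - infDist y s) / (b - a)))
      ≤ dist ((b - infDist x s) / (b - a)) ((b - infDist y s) / (b - a)) :=
        (LipschitzWith.projIcc zero_le_one).dist_le_mul _ _ |>.trans_eq (one_mul _)
    _ = (b - a)⁻¹ * |infDist x s - infDist y s| := by
        rw [Real.dist_eq, ← sub_div, abs_div, abs_of_pos hba, abs_sub_comm]
        ring_nf
    _ ≤ (b - a)⁻¹ * dist x y := by
        gcongr
        exact (lipschitz_infDist_pt s).dist_le_mul x y |>.trans_eq (one_mul _)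

theorem exists_contDiff_cutoff_infDist {F : Type*} [NormedAddCommGroup F] [NormedSpace ℝ F]
    [FiniteDimensional ℝ F] (s : Set F) {a b ε : ℝ} (hε : 0 < ε) (hab : a < b) :
    ∃ v : F → ℝ, ContDiff ℝ ∞ v ∧ (∀ x, v x ∈ Icc 0 1) ∧
      (∀ x, infDist x s < a - ε → v x = 1) ∧ (∀ x, b + ε < infDist x s → v x = 0) ∧
      LipschitzWith (b - a)⁻¹.toNNReal v := by
  borelize F
  have hba : 0 < b - a := sub_pos.2 hab
  set g : F → ℝ := fun x => (projIcc 0 1 zero_le_one ((b - infDist x s) / (b - a)) : ℝ)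
  have hg : LipschitzWith (b - a)⁻¹.toNNReal g := lipschitzWith_projIcc_infDist s hab
  have hg1 : ∀ y, infDist y s ≤ a → g y = 1 := fun y hy => by
    have : 1 ≤ (b - infDist y s) / (b - a) := (one_le_div hba).2 (by linarith)
    simp only [g, projIcc_of_right_le _ this]
  have hg0 : ∀ y, b ≤ infDist y s → g y = 0 := fun y hy => by
    have : (b - infDist y s) / (b - a) ≤ 0 := div_nonpos_of_nonpos_of_nonneg (by linarith) hba.le
    simp only [g, projIcc_of_le_left _ this]
  have hinfDist (x y : F) (hy : y ∈ ball x ε) : |infDist y s - infDist x s| < ε := by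
    rw [mem_ball] at hy
    exact ((lipschitz_infDist_pt s).dist_le_mul y x).trans_lt (by simpa using hy)
  let φ : ContDiffBump (0 : F) := ⟨ε / 2, ε, half_pos hε, half_lt_self hε⟩
  refine ⟨φ.normed .addHaar ⋆[ContinuousLinearMap.lsmul ℝ ℝ, .addHaar] g,
    φ.hasCompactSupport_normed.contDiff_convolution_left _ φ.contDiff_normed
      hg.continuous.locallyIntegrable,
    φ.normed_convolution_mem_Icc hg.continuous fun x => Subtype.prop _,
    fun x hx => ?_, fun x hx => ?_, φ.lipschitzWith_normed_convolution hg⟩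
  · rw [φ.normed_convolution_eq_right fun y hy => ?_, hg1 x (by linarith)]
    have := (abs_lt.1 (hinfDist x y hy)).2
    rw [hg1 y (by linarith), hg1 x (by linarith)]
  · rw [φ.normed_convolution_eq_right fun y hy => ?_, hg0 x (by linarith)]
    have := (abs_lt.1 (hinfDist x y hy)).1
    rw [hg0 y (by linarith), hg0 x (by linarith)]

theorem gradient_eq_zero_of_eqOn_const {F : Type*} [NormedAddCommGroup F] [InnerProductSpace ℝ F]
    [CompleteSpace F] {f : F → ℝ} {U : Set F} {c : ℝ} (hU : IsOpen U)
    (hf : EqOn f (fun _ => c) U) {x : F} (hx : x ∈ U) : gradient f x = 0 := by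
  rw [(Filter.eventuallyEq_of_mem (hU.mem_nhds hx) hf).gradient_eq, gradient_fun_const]

theorem norm_gradient_le_of_lipschitzWith {F : Type*} [NormedAddCommGroup F]
    [InnerProductSpace ℝ F] [CompleteSpace F] {f : F → ℝ} {C : ℝ≥0} (hf : LipschitzWith C f)
    (x : F) : ‖gradient f x‖ ≤ C := by
  rw [gradient, LinearIsometryEquiv.norm_map]
  exact norm_fderiv_le_of_lipschitz ℝ hf

theorem smoothed_indicator_general {d : ℕ} (K : Set (E d)) (δ : ℝ) (hδ : 0 < δ) :
    ∃ v : E d → ℝ, ContDiff ℝ 1 v ∧ (∀ x, v x ∈ Set.Icc (0 : ℝ) 1) ∧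
      (∀ x ∈ K, v x = 1) ∧
      (∀ x, x ∉ {z : E d | ∃ y ∈ K, ‖z - y‖ ≤ 2 * δ} → v x = 0) ∧
      ∀ x, ‖gradient v x‖ ≤ δ⁻¹ * d * theta (d - 1) / theta d *
        Set.indicator ({z : E d | ∃ y ∈ K, ‖z - y‖ ≤ 2 * δ} \ K) (fun _ => (1 : ℝ)) x := by
  set S : Set (E d) := {z : E d | ∃ y ∈ K, ‖z - y‖ ≤ 2 * δ}
  rcases K.eq_empty_or_nonempty with rfl | ⟨y₀, hy₀⟩
  · exact ⟨fun _ => 0, contDiff_const, fun _ => ⟨le_rfl, zero_le_one⟩, by simp, fun _ _ => rfl,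
      by simp [S]⟩
  obtain ⟨v, hv, hv01, hv1, hv0, hvlip⟩ := exists_contDiff_cutoff_infDist K
    (a := δ / 2) (b := 3 * δ / 2) (ε := δ / 4) (by positivity) (by linarith)
  have hK : ∀ x ∈ K, infDist x K < δ / 4 := fun x hx => by
    simpa [infDist_zero_of_mem hx] using hδ
  have hS : ∀ x ∉ S, 2 * δ ≤ infDist x K := fun x hx =>
    (le_infDist ⟨y₀, hy₀⟩).2 fun y hy => le_of_not_gt fun h => hx ⟨y, hy, (dist_eq_norm x y ▸ h).le⟩
  refine ⟨v, hv.of_le (by norm_num), hv01, fun x hx => hv1 x (by linarith [hK x hx]),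
    fun x hx => hv0 x (by linarith [hS x hx]), fun x => ?_⟩
  by_cases hxK : x ∈ K
  · rw [gradient_eq_zero_of_eqOn_const (isOpen_lt (continuous_infDist_pt K) continuous_const)
      (fun y hy => hv1 y (by linarith [hy.out])) (hK x hxK),
      indicator_of_notMem fun h => h.2 hxK, norm_zero, mul_zero]
  by_cases hxS : x ∉ S
  · rw [gradient_eq_zero_of_eqOn_const (isOpen_lt continuous_const (continuous_infDist_pt K))
      (fun y hy => hv0 y (by linarith [hy.out])) (by linarith [hS x hxS] : 7 * δ / 4 < _),
      indicator_of_notMem fun h => hxS h.1, norm_zero, mul_zero]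
  have hxSK : x ∈ S \ K := ⟨not_not.1 hxS, hxK⟩
  have hd : d ≠ 0 := by
    rintro rfl
    exact hxK (Subsingleton.elim y₀ x ▸ hy₀)
  rw [indicator_of_mem hxSK, mul_one, mul_assoc, mul_div_assoc]
  calc ‖gradient v x‖ ≤ δ⁻¹ := by
        simpa [show 3 * δ / 2 - δ / 2 = δ by ring, hδ.le]
          using norm_gradient_le_of_lipschitzWith hvlip x
    _ ≤ δ⁻¹ * (d * theta (d - 1) / theta d) :=
        le_mul_of_one_le_right (by positivity) (one_le_mul_theta_pred_div_theta hd)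

/-- Smoothed indicator function. For each compact `K ⊆ ℝ^d` and `δ > 0`,
with `K^{2δ} = {x : ∃ y ∈ K, ‖x-y‖₂ ≤ 2δ}`, there is a `C¹` function `v : ℝ^d → [0,1]` with
`v = 1` on `K`, `v = 0` off `K^{2δ}`, and
`‖∇v(x)‖₂ ≤ (δ⁻¹ d θ_{d-1}/θ_d) · 1{x ∈ K^{2δ} \ K}`. -/
theorem smoothed_indicator {d : ℕ} (K : Set (E d)) (hK : IsCompact K) (δ : ℝ) (hδ : 0 < δ) :
    ∃ v : E d → ℝ, ContDiff ℝ 1 v ∧ (∀ x, v x ∈ Set.Icc (0 : ℝ) 1) ∧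
      (∀ x ∈ K, v x = 1) ∧
      (∀ x, x ∉ {z : E d | ∃ y ∈ K, ‖z - y‖ ≤ 2 * δ} → v x = 0) ∧
      ∀ x, ‖gradient v x‖ ≤ δ⁻¹ * d * theta (d - 1) / theta d *
        Set.indicator ({z : E d | ∃ y ∈ K, ‖z - y‖ ≤ 2 * δ} \ K) (fun _ => (1 : ℝ)) x :=
  smoothed_indicator_general K δ hδ
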